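/- Fix p ∈ [1,∞) with p ≠ 2 and two functions ω, Ω : [0,∞) → [0,∞) with ω(1) > 0. For every m ∈ ℕ, setting n = 2^{m+1} + 1, consider the n-point subset 𝒮 of ℝ^{2^m} given by 𝒮 = {0} ∪ {e_1,…,e_{2^m}} ∪ {2^{−m/p}·w_1,…,2^{−m/p}·w_{2^m}}, where e_1,…,e_{2^m} are the standard coordinate vectors and w_1,…,w_{2^m} are the rows of the 2^m × 2^m Walsh matrix, whose entries are W_{ij} = (−1)^{⟨i−1, j−1⟩}, with ⟨a,b⟩ denoting the inner product of the binary digit expansions of a and b. Then 𝒮 is contained in the unit ball of ℓ_p^{2^m}, and if d ∈ ℕ and T : ℝ^{2^m} → ℝ^d is a linear operator satisfying ω(‖x − y‖_{ℓ_p^{2^m}}) ≤ ‖Tx − Ty‖_{ℓ_p^d} ≤ Ω(‖x − y‖_{ℓ_p^{2^m}}) for all x, y ∈ 𝒮, then d ≥ (ω(1)/Ω(1))^{2p/|p−2|}·(n−1)/2. -/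

import Mathlib

open MeasureTheory

/-- The `ℓ_p` norm on `ℝ^N`: `‖a‖_{ℓ_p^N} = (∑ i |a i|^p)^{1/p}`. -/
noncomputable def lpNorm (p : ℝ) {N : ℕ} (a : Fin N → ℝ) : ℝ :=
  (∑ i, |a i| ^ p) ^ (1 / p)

/-- The `i`-th row of the `2^m × 2^m` Walsh matrix: its `j`-th entry is `(-1)` raised to
the inner product of the binary digit expansions of `i` and `j`. -/
def walshRow (m : ℕ) (i : Fin (2 ^ m)) : Fin (2 ^ m) → ℝ := fun j =>
  (-1 : ℝ) ^ ((Finset.range m).filter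
    (fun k => Nat.testBit i.val k ∧ Nat.testBit j.val k)).card

/-- The `n`-point set `𝒮 = {0} ∪ {e₁,…,e_{2^m}} ∪ {2^{-m/p} w₁,…,2^{-m/p} w_{2^m}}`
in `ℝ^{2^m}`, where `n = 2^{m+1} + 1`. -/
noncomputable def walshSet (p : ℝ) (m : ℕ) : Set (Fin (2 ^ m) → ℝ) :=
  {0} ∪ Set.range (fun j : Fin (2 ^ m) => (Pi.single j 1 : Fin (2 ^ m) → ℝ)) ∪
    Set.range (fun i : Fin (2 ^ m) => ((2 : ℝ) ^ (-((m : ℝ) / p))) • walshRow m i)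

section Helpers

private def wN (m i j : ℕ) : ℝ :=
  (-1 : ℝ) ^ ((Finset.range m).filter (fun k => Nat.testBit i k ∧ Nat.testBit j k)).card

private lemma wN_mod (m i j : ℕ) : wN m i j = wN m i (j % 2 ^ m) := by
  unfold wN
  congr 2
  apply Finset.filter_congr
  intro k hk
  simp only [Finset.mem_range] at hk
  simp [Nat.testBit_mod_two_pow, hk]

private lemma wN_low (m i j : ℕ) (hi : i < 2 ^ m) : wN (m + 1) i j = wN m i j := by
  unfold wN
  congr 2
  rw [Finset.range_add_one, Finset.filter_insert]
  have : Nat.testBit i m = false := Nat.testBit_lt_two_pow hi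
  simp [this]

private lemma wN_high (m i j : ℕ) (hi : i < 2 ^ m) :
    wN (m + 1) (2 ^ m + i) j = wN m i j * (if Nat.testBit j m then (-1 : ℝ) else 1) := by
  unfold wN
  have hfe : (Finset.range m).filter (fun k => Nat.testBit (2 ^ m + i) k ∧ Nat.testBit j k)
      = (Finset.range m).filter (fun k => Nat.testBit i k ∧ Nat.testBit j k) := by
    apply Finset.filter_congr
    intro k hk
    simp only [Finset.mem_range] at hk
    simp [Nat.testBit_two_pow_add_gt hk]
  rw [Finset.range_add_one, Finset.filter_insert]
  have him : Nat.testBit (2 ^ m + i) m = true := by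
    rw [Nat.testBit_two_pow_add_eq, Nat.testBit_lt_two_pow hi]; rfl
  have hm : m ∉ (Finset.range m).filter (fun k => Nat.testBit (2 ^ m + i) k ∧ Nat.testBit j k) := by
    simp
  by_cases hjm : Nat.testBit j m
  · simp only [him, hjm, true_and, if_true]
    rw [Finset.card_insert_of_notMem hm, hfe, pow_succ]
  · simp only [him, hjm, true_and, if_false, Bool.false_eq_true, if_false]
    rw [hfe, mul_one]

private lemma bit_mod_eq {m j j' : ℕ} (hj : j < 2 ^ (m + 1)) (hj' : j' < 2 ^ (m + 1))
    (hb : Nat.testBit j m = Nat.testBit j' m) (hm : j % 2 ^ m = j' % 2 ^ m) : j = j' := by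
  have h1 : j = 2 ^ m * (j / 2 ^ m) + j % 2 ^ m := (Nat.div_add_mod j (2 ^ m)).symm
  have h2 : j' = 2 ^ m * (j' / 2 ^ m) + j' % 2 ^ m := (Nat.div_add_mod j' (2 ^ m)).symm
  have hd : j / 2 ^ m < 2 := Nat.div_lt_of_lt_mul (by rw [← pow_succ]; exact hj)
  have hd' : j' / 2 ^ m < 2 := Nat.div_lt_of_lt_mul (by rw [← pow_succ]; exact hj')
  have ht : Nat.testBit j m = decide (j / 2 ^ m % 2 = 1) := Nat.testBit_eq_decide_div_mod_eq
  have ht' : Nat.testBit j' m = decide (j' / 2 ^ m % 2 = 1) := Nat.testBit_eq_decide_div_mod_eq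
  rw [Nat.mod_eq_of_lt hd] at ht
  rw [Nat.mod_eq_of_lt hd'] at ht'
  have hdd : j / 2 ^ m = j' / 2 ^ m := by
    rw [ht, ht'] at hb
    have e1 : j / 2 ^ m = 0 ∨ j / 2 ^ m = 1 := by
      generalize hq : j / 2 ^ m = q at hd ⊢
      omega
    have e2 : j' / 2 ^ m = 0 ∨ j' / 2 ^ m = 1 := by
      generalize hq : j' / 2 ^ m = q at hd' ⊢
      omega
    rcases e1 with h | h <;> rcases e2 with h' | h' <;> rw [h, h'] at hb ⊢ <;>
      first | rfl | (exfalso; revert hb; decide)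
  rw [hdd, hm] at h1
  exact h1.trans h2.symm

private lemma wN_orth (m : ℕ) : ∀ j j', j < 2 ^ m → j' < 2 ^ m →
    ∑ i ∈ Finset.range (2 ^ m), wN m i j * wN m i j'
      = if j = j' then ((2 : ℝ) ^ m) else 0 := by
  induction m with
  | zero =>
    intro j j' hj hj'
    interval_cases j <;> interval_cases j' <;> simp [wN]
  | succ m ih =>
    intro j j' hj hj'
    have hsplit : (2 : ℕ) ^ (m + 1) = 2 ^ m + 2 ^ m := by ring
    rw [hsplit, Finset.sum_range_add]
    set εj : ℝ := if Nat.testBit j m then (-1 : ℝ) else 1 with hεj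
    set εj' : ℝ := if Nat.testBit j' m then (-1 : ℝ) else 1 with hεj'
    have hmod : j % 2 ^ m < 2 ^ m := Nat.mod_lt _ (Nat.two_pow_pos m)
    have hmod' : j' % 2 ^ m < 2 ^ m := Nat.mod_lt _ (Nat.two_pow_pos m)
    have h1 : ∑ i ∈ Finset.range (2 ^ m), wN (m + 1) i j * wN (m + 1) i j'
        = if j % 2 ^ m = j' % 2 ^ m then ((2 : ℝ) ^ m) else 0 := by
      rw [← ih _ _ hmod hmod']
      apply Finset.sum_congr rfl
      intro i hi
      simp only [Finset.mem_range] at hi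
      rw [wN_low m i j hi, wN_low m i j' hi, wN_mod m i j, wN_mod m i j']
    have h2 : ∑ i ∈ Finset.range (2 ^ m), wN (m + 1) (2 ^ m + i) j * wN (m + 1) (2 ^ m + i) j'
        = (εj * εj') * (if j % 2 ^ m = j' % 2 ^ m then ((2 : ℝ) ^ m) else 0) := by
      rw [← ih _ _ hmod hmod', Finset.mul_sum]
      apply Finset.sum_congr rfl
      intro i hi
      simp only [Finset.mem_range] at hi
      rw [wN_high m i j hi, wN_high m i j' hi, wN_mod m i j, wN_mod m i j']
      ring
    rw [h1, h2]
    by_cases hb : Nat.testBit j m = Nat.testBit j' m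
    · have hee : εj * εj' = 1 := by
        rw [hεj, hεj', hb]; by_cases h : Nat.testBit j' m <;> simp [h]
      by_cases hmm : j % 2 ^ m = j' % 2 ^ m
      · have hjj : j = j' := bit_mod_eq hj hj' hb hmm
        rw [hee, hjj]
        simp [pow_succ]
        try ring
      · have hjj : j ≠ j' := fun h => hmm (by rw [h])
        simp [hmm, hjj]
    · have hjj : j ≠ j' := fun h => hb (by rw [h])
      have hee : εj * εj' = -1 := by
        rw [hεj, hεj']
        rcases Bool.eq_false_or_eq_true (Nat.testBit j m) with h | h <;>
          rcases Bool.eq_false_or_eq_true (Nat.testBit j' m) with h' | h' <;>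
            simp_all
      rw [hee]
      by_cases hmm : j % 2 ^ m = j' % 2 ^ m <;> simp [hmm, hjj]

private lemma walsh_orth_fin (m : ℕ) (j j' : Fin (2 ^ m)) :
    ∑ i : Fin (2 ^ m), walshRow m i j * walshRow m i j'
      = if j = j' then ((2 : ℝ) ^ m) else 0 := by
  have h := wN_orth m j.val j'.val j.isLt j'.isLt
  rw [← Fin.sum_univ_eq_sum_range (fun i => wN m i j.val * wN m i j'.val) (2 ^ m)] at h
  have : ∑ i : Fin (2 ^ m), walshRow m i j * walshRow m i j'
      = ∑ i : Fin (2 ^ m), wN m i.val j.val * wN m i.val j'.val := rfl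
  rw [this, h]
  simp [Fin.val_inj]

private lemma walsh_parseval (m : ℕ) (a : Fin (2 ^ m) → ℝ) :
    ∑ i : Fin (2 ^ m), (∑ j, walshRow m i j * a j) ^ 2
      = (2 : ℝ) ^ m * ∑ j, (a j) ^ 2 := by
  have h1 : ∀ i : Fin (2 ^ m), (∑ j, walshRow m i j * a j) ^ 2
      = ∑ j, ∑ j', (a j * a j') * (walshRow m i j * walshRow m i j') := by
    intro i
    rw [sq, Finset.sum_mul_sum]
    exact Finset.sum_congr rfl fun j _ => Finset.sum_congr rfl fun j' _ => by ring
  calc ∑ i : Fin (2 ^ m), (∑ j, walshRow m i j * a j) ^ 2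
      = ∑ i : Fin (2 ^ m), ∑ j, ∑ j', (a j * a j') * (walshRow m i j * walshRow m i j') :=
        Finset.sum_congr rfl fun i _ => h1 i
    _ = ∑ j, ∑ j', ∑ i : Fin (2 ^ m), (a j * a j') * (walshRow m i j * walshRow m i j') := by
        rw [Finset.sum_comm]
        exact Finset.sum_congr rfl fun j _ => Finset.sum_comm
    _ = ∑ j, ∑ j', (a j * a j') * ∑ i : Fin (2 ^ m), walshRow m i j * walshRow m i j' :=
        Finset.sum_congr rfl fun j _ => Finset.sum_congr rfl fun j' _ =>
          (Finset.mul_sum _ _ _).symm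
    _ = (2 : ℝ) ^ m * ∑ j, (a j) ^ 2 := by
        rw [Finset.mul_sum]
        apply Finset.sum_congr rfl
        intro j _
        rw [Finset.sum_congr rfl fun j' (_ : j' ∈ Finset.univ) => by rw [walsh_orth_fin m j j']]
        simp only [mul_ite, mul_zero]
        rw [Finset.sum_ite_eq Finset.univ j (fun j' => a j * a j' * (2 : ℝ) ^ m)]
        simp [sq]
        ring

private lemma sum_rpow_le_rpow_sum' {ι : Type*} (s : Finset ι) (a : ι → ℝ)
    (ha : ∀ i ∈ s, 0 ≤ a i) {t : ℝ} (ht : 1 ≤ t) :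
    ∑ i ∈ s, a i ^ t ≤ (∑ i ∈ s, a i) ^ t := by
  have hS : 0 ≤ ∑ i ∈ s, a i := Finset.sum_nonneg ha
  have ht0 : t ≠ 0 := by positivity
  have hte : (1 : ℝ) + (t - 1) = t := by ring
  have key : ∀ i ∈ s, a i ^ t ≤ a i * (∑ i ∈ s, a i) ^ (t - 1) := by
    intro i hi
    have hai := ha i hi
    have hle : a i ≤ ∑ i ∈ s, a i := Finset.single_le_sum ha hi
    calc a i ^ t = a i ^ ((1 : ℝ) + (t - 1)) := by rw [hte]
      _ = a i ^ (1 : ℝ) * a i ^ (t - 1) := Real.rpow_add' hai (by rw [hte]; exact ht0)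
      _ = a i * a i ^ (t - 1) := by rw [Real.rpow_one]
      _ ≤ a i * (∑ i ∈ s, a i) ^ (t - 1) :=
          mul_le_mul_of_nonneg_left (Real.rpow_le_rpow hai hle (by linarith)) hai
  calc ∑ i ∈ s, a i ^ t ≤ ∑ i ∈ s, a i * (∑ i ∈ s, a i) ^ (t - 1) := Finset.sum_le_sum key
    _ = (∑ i ∈ s, a i) * (∑ i ∈ s, a i) ^ (t - 1) := by rw [← Finset.sum_mul]
    _ = (∑ i ∈ s, a i) ^ t := by
        have h3 : (∑ i ∈ s, a i) ^ (1:ℝ) * (∑ i ∈ s, a i) ^ (t - 1) = (∑ i ∈ s, a i) ^ t := by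
          rw [← Real.rpow_add' hS (by rw [hte]; exact ht0), hte]
        rw [← h3, Real.rpow_one]

private lemma sum_rpow_le_card_rpow' {ι : Type*} (s : Finset ι) (a : ι → ℝ)
    (ha : ∀ i ∈ s, 0 ≤ a i) {σ : ℝ} (h0 : 0 < σ) (h1 : σ ≤ 1) :
    ∑ i ∈ s, a i ^ σ ≤ (s.card : ℝ) ^ (1 - σ) * (∑ i ∈ s, a i) ^ σ := by
  have hq : 1 ≤ 1 / σ := by rw [le_div_iff₀ h0]; linarith
  have h := Real.rpow_sum_le_const_mul_sum_rpow_of_nonneg s (f := fun i => a i ^ σ) hq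
      (fun i hi => Real.rpow_nonneg (ha i hi) σ)
  have hsimp : ∀ i ∈ s, (a i ^ σ) ^ (1 / σ) = a i := by
    intro i hi
    rw [← Real.rpow_mul (ha i hi), mul_one_div, div_self h0.ne', Real.rpow_one]
  rw [Finset.sum_congr rfl hsimp] at h
  have hL : 0 ≤ ∑ i ∈ s, a i ^ σ := Finset.sum_nonneg fun i hi => Real.rpow_nonneg (ha i hi) σ
  have h2 := Real.rpow_le_rpow (Real.rpow_nonneg hL _) h h0.le
  rw [← Real.rpow_mul hL, one_div, inv_mul_cancel₀ h0.ne', Real.rpow_one] at h2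
  calc ∑ i ∈ s, a i ^ σ ≤ ((s.card : ℝ) ^ (σ⁻¹ - 1) * ∑ i ∈ s, a i) ^ σ := h2
    _ = (s.card : ℝ) ^ (1 - σ) * (∑ i ∈ s, a i) ^ σ := by
        rw [Real.mul_rpow (Real.rpow_nonneg (Nat.cast_nonneg _) _) (Finset.sum_nonneg ha),
          ← Real.rpow_mul (Nat.cast_nonneg _)]
        congr 1
        field_simp

private lemma le_of_rpow_le_rpow {a b s : ℝ} (ha : 0 ≤ a) (hb : 0 ≤ b) (hs : 0 < s)
    (h : a ^ s ≤ b ^ s) : a ≤ b := by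
  have h2 := Real.rpow_le_rpow (Real.rpow_nonneg ha s) h (by positivity : (0:ℝ) ≤ 1 / s)
  rwa [← Real.rpow_mul ha, ← Real.rpow_mul hb, mul_one_div, div_self hs.ne', Real.rpow_one,
    Real.rpow_one] at h2

private lemma lpNorm_nonneg' (p : ℝ) {N : ℕ} (a : Fin N → ℝ) : 0 ≤ lpNorm p a :=
  Real.rpow_nonneg (Finset.sum_nonneg fun i _ => Real.rpow_nonneg (abs_nonneg _) p) _

private lemma lpNorm_zero' {p : ℝ} (hp0 : 0 < p) {N : ℕ} : lpNorm p (0 : Fin N → ℝ) = 0 := by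
  unfold _root_.lpNorm
  simp [abs_zero, Real.zero_rpow hp0.ne', Real.zero_rpow (inv_ne_zero hp0.ne'), one_div]

private lemma lpNorm_single' {p : ℝ} (hp0 : 0 < p) {N : ℕ} (j : Fin N) :
    lpNorm p (Pi.single j 1 : Fin N → ℝ) = 1 := by
  unfold _root_.lpNorm
  have h : ∀ i : Fin N, |(Pi.single j 1 : Fin N → ℝ) i| ^ p = if i = j then 1 else 0 := by
    intro i
    rcases eq_or_ne i j with rfl | h
    · rw [Pi.single_eq_same, abs_one, Real.one_rpow, if_pos rfl]
    · rw [Pi.single_eq_of_ne h, abs_zero, Real.zero_rpow hp0.ne', if_neg h]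
  rw [Finset.sum_congr rfl fun i _ => h i, Finset.sum_ite_eq' Finset.univ j (fun _ => (1:ℝ))]
  simp

private lemma lpNorm_smul' {p : ℝ} (hp0 : 0 < p) {N : ℕ} (c : ℝ) (hc : 0 ≤ c) (v : Fin N → ℝ) :
    lpNorm p (c • v) = c * lpNorm p v := by
  unfold _root_.lpNorm
  have h1 : ∀ i, |(c • v) i| ^ p = c ^ p * |v i| ^ p := by
    intro i
    rw [Pi.smul_apply, smul_eq_mul, abs_mul, abs_of_nonneg hc, Real.mul_rpow hc (abs_nonneg _)]
  rw [Finset.sum_congr rfl fun i _ => h1 i, ← Finset.mul_sum,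
    Real.mul_rpow (Real.rpow_nonneg hc p)
      (Finset.sum_nonneg fun i _ => Real.rpow_nonneg (abs_nonneg _) p),
    ← Real.rpow_mul hc, mul_one_div, div_self hp0.ne', Real.rpow_one]

private lemma c_mul_pow {p : ℝ} (hp0 : 0 < p) (m : ℕ) :
    (2:ℝ) ^ (-((m:ℝ)/p)) * (((2 ^ m : ℕ) : ℝ)) ^ (1/p : ℝ) = 1 := by
  have h2 : ((2 ^ m : ℕ) : ℝ) = (2:ℝ) ^ ((m : ℝ)) := by
    rw [Real.rpow_natCast]
    push_cast
    ring
  rw [h2, ← Real.rpow_mul (by norm_num : (0:ℝ) ≤ 2), ← Real.rpow_add two_pos,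
    show -((m:ℝ)/p) + (m:ℝ) * (1/p) = 0 by ring, Real.rpow_zero]

private lemma lpNorm_walshRow' {p : ℝ} (hp0 : 0 < p) (m : ℕ) (i : Fin (2 ^ m)) :
    lpNorm p (((2:ℝ) ^ (-((m:ℝ)/p))) • walshRow m i) = 1 := by
  rw [lpNorm_smul' hp0 _ (Real.rpow_pos_of_pos two_pos _).le]
  unfold _root_.lpNorm
  have h : ∀ j : Fin (2 ^ m), |walshRow m i j| ^ p = 1 := by
    intro j
    unfold walshRow
    rw [abs_pow, abs_neg, abs_one, one_pow, Real.one_rpow]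
  rw [Finset.sum_congr rfl fun j _ => h j, Finset.sum_const, Finset.card_univ, Fintype.card_fin,
    nsmul_eq_mul, mul_one]
  exact c_mul_pow hp0 m

private lemma ending' {n D wo Wo t α : ℝ} (hn : 0 < n) (hD : 0 < D) (hwo : 0 < wo) (hWo : 0 < Wo)
    (ht : 0 < t) (hα : α = 2 / t) (key : n ^ t * wo ^ (2:ℝ) ≤ D ^ t * Wo ^ (2:ℝ)) :
    (wo / Wo) ^ α * n ≤ D := by
  set R := Wo / wo with hRdef
  have hR : 0 < R := div_pos hWo hwo
  have hρt : (n / D) ^ t ≤ R ^ (2:ℝ) := by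
    rw [Real.div_rpow hn.le hD.le, hRdef, Real.div_rpow hWo.le hwo.le,
      div_le_div_iff₀ (Real.rpow_pos_of_pos hD t) (Real.rpow_pos_of_pos hwo _)]
    calc n ^ t * wo ^ (2:ℝ) ≤ D ^ t * Wo ^ (2:ℝ) := key
      _ = Wo ^ (2:ℝ) * D ^ t := by ring
  have hρ : n / D ≤ R ^ α := by
    have h2 := Real.rpow_le_rpow (Real.rpow_nonneg (div_pos hn hD).le t) hρt
      (le_of_lt (by positivity : (0:ℝ) < 1 / t))
    rwa [← Real.rpow_mul (div_pos hn hD).le, mul_one_div, div_self ht.ne', Real.rpow_one,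
      ← Real.rpow_mul hR.le, mul_one_div, ← hα] at h2
  have hwoWo : wo / Wo = R⁻¹ := by rw [hRdef, inv_div]
  rw [hwoWo, Real.inv_rpow hR.le]
  have hRα : 0 < R ^ α := Real.rpow_pos_of_pos hR α
  calc (R ^ α)⁻¹ * n ≤ (R ^ α)⁻¹ * (R ^ α * D) := by
        apply mul_le_mul_of_nonneg_left _ (inv_nonneg.mpr hRα.le)
        exact (div_le_iff₀ hD).mp hρ
    _ = D := by field_simp

private lemma main_bound {p : ℝ} (hp1 : 1 ≤ p) (hp2 : p ≠ 2)
    {d N : ℕ} (hdpos : 0 < d) (hNpos : 0 < N)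
    (X Y : Fin N → Fin d → ℝ)
    (hPar : ∑ i, ∑ k, (Y i k) ^ 2 = (N:ℝ) * ∑ j, ∑ k, (X j k) ^ 2)
    {wo Wo : ℝ} (hwo : 0 < wo) (hWo : 0 < Wo)
    (hXub : ∀ j, (∑ k, |X j k| ^ p) ^ (1/p) ≤ Wo)
    (hXlb : ∀ j, wo ≤ (∑ k, |X j k| ^ p) ^ (1/p))
    (hYub : ∀ i, (∑ k, |Y i k| ^ p) ^ (1/p) ≤ Wo * (N:ℝ) ^ (1/p : ℝ))
    (hYlb : ∀ i, wo * (N:ℝ) ^ (1/p : ℝ) ≤ (∑ k, |Y i k| ^ p) ^ (1/p)) :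
    (wo / Wo) ^ (2 * p / |p - 2|) * (N : ℝ) ≤ (d : ℝ) := by
  have hp0 : 0 < p := lt_of_lt_of_le one_pos hp1
  have hn : (0:ℝ) < (N:ℝ) := Nat.cast_pos.mpr hNpos
  have hD : (0:ℝ) < (d:ℝ) := Nat.cast_pos.mpr hdpos
  set n : ℝ := (N:ℝ)
  set D : ℝ := (d:ℝ)
  -- abbreviations
  have hA_nonneg : ∀ j, (0:ℝ) ≤ ∑ k, |X j k| ^ p :=
    fun j => Finset.sum_nonneg fun k _ => Real.rpow_nonneg (abs_nonneg _) p
  have hB_nonneg : ∀ i, (0:ℝ) ≤ ∑ k, |Y i k| ^ p :=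
    fun i => Finset.sum_nonneg fun k _ => Real.rpow_nonneg (abs_nonneg _) p
  have hQX_nonneg : ∀ j, (0:ℝ) ≤ ∑ k, (X j k) ^ 2 :=
    fun j => Finset.sum_nonneg fun k _ => sq_nonneg _
  have hQY_nonneg : ∀ i, (0:ℝ) ≤ ∑ k, (Y i k) ^ 2 :=
    fun i => Finset.sum_nonneg fun k _ => sq_nonneg _
  have h_p2 : ∀ x : ℝ, (|x| ^ p) ^ (2/p : ℝ) = x ^ 2 := by
    intro x
    rw [← Real.rpow_mul (abs_nonneg x), show p * (2/p) = 2 by field_simp,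
      show ((2:ℝ)) = ((2:ℕ):ℝ) by norm_num, Real.rpow_natCast, sq_abs]
  have h_sqp : ∀ x : ℝ, ((x ^ 2 : ℝ)) ^ (p/2 : ℝ) = |x| ^ p := by
    intro x
    rw [← sq_abs, ← Real.rpow_natCast |x| 2, ← Real.rpow_mul (abs_nonneg x)]
    congr 1
    push_cast
    ring
  -- two cases
  rcases lt_or_gt_of_ne hp2 with hplt | hpgt
  · -- p < 2
    set t : ℝ := 2/p - 1 with htdef
    have ht : 0 < t := by
      have : 1 < 2/p := (one_lt_div hp0).mpr hplt
      simp only [htdef]; linarith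
    have hαeq : 2 * p / |p - 2| = 2 / t := by
      rw [abs_of_neg (by linarith : p - 2 < 0), htdef]
      field_simp
      try ring
    rw [hαeq]
    -- step 1 : QX j ≤ Wo^2
    have step1 : ∀ j, (∑ k, (X j k) ^ 2) ≤ Wo ^ (2:ℝ) := by
      intro j
      have hc1 : ∑ k, ((|X j k| ^ p)) ^ (2/p : ℝ) ≤ (∑ k, |X j k| ^ p) ^ (2/p : ℝ) :=
        sum_rpow_le_rpow_sum' _ _ (fun k _ => Real.rpow_nonneg (abs_nonneg _) p)
          ((le_div_iff₀ hp0).mpr (by linarith))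
      rw [Finset.sum_congr rfl fun k _ => h_p2 (X j k)] at hc1
      have h4 : (∑ k, |X j k| ^ p) ^ (2/p : ℝ) ≤ Wo ^ (2:ℝ) := by
        have h5 : (∑ k, |X j k| ^ p) ^ ((1/p) * (2:ℝ)) = ((∑ k, |X j k| ^ p) ^ (1/p)) ^ (2:ℝ) :=
          Real.rpow_mul (hA_nonneg j) _ _
        rw [show (2/p : ℝ) = (1/p) * 2 by ring, h5]
        exact Real.rpow_le_rpow (Real.rpow_nonneg (hA_nonneg j) _) (hXub j) (by norm_num)
      exact hc1.trans h4
    -- step 2 : n^{2/p} wo^2 D^{1-2/p} ≤ QY i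
    have step2 : ∀ i, n ^ (2/p : ℝ) * wo ^ (2:ℝ) * D ^ (1 - 2/p) ≤ ∑ k, (Y i k) ^ 2 := by
      intro i
      have hcore := sum_rpow_le_card_rpow' Finset.univ (fun k => (Y i k) ^ 2)
        (fun k _ => sq_nonneg _) (σ := p/2) (by positivity) (by linarith)
      rw [Finset.card_univ, Fintype.card_fin] at hcore
      rw [Finset.sum_congr rfl fun k _ => h_sqp (Y i k)] at hcore
      -- hcore : ∑ |Y|^p ≤ D^{1-p/2} * QY^{p/2}
      have hBlb : (wo * n ^ (1/p : ℝ)) ^ p ≤ ∑ k, |Y i k| ^ p := by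
        have h0 : (0:ℝ) ≤ wo * n ^ (1/p : ℝ) := by positivity
        have h6 := Real.rpow_le_rpow h0 (hYlb i) hp0.le
        rwa [← Real.rpow_mul (hB_nonneg i), one_div_mul_cancel hp0.ne',
          Real.rpow_one] at h6
      have hDQ : (wo * n ^ (1/p : ℝ)) ^ p / D ^ (1 - p/2) ≤ (∑ k, (Y i k) ^ 2) ^ (p/2 : ℝ) := by
        rw [div_le_iff₀ (Real.rpow_pos_of_pos hD _)]
        calc (wo * n ^ (1/p : ℝ)) ^ p ≤ ∑ k, |Y i k| ^ p := hBlb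
          _ ≤ (D:ℝ) ^ (1 - p/2) * (∑ k, (Y i k) ^ 2) ^ (p/2 : ℝ) := hcore
          _ = (∑ k, (Y i k) ^ 2) ^ (p/2 : ℝ) * D ^ (1 - p/2) := by ring
      apply le_of_rpow_le_rpow (by positivity) (hQY_nonneg i) (by positivity : (0:ℝ) < p/2)
      have E : (n ^ (2/p : ℝ) * wo ^ (2:ℝ) * D ^ (1 - 2/p)) ^ (p/2 : ℝ)
          = (wo * n ^ (1/p : ℝ)) ^ p / D ^ (1 - p/2) := by
        rw [Real.mul_rpow (by positivity) (Real.rpow_nonneg hD.le _),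
          Real.mul_rpow (Real.rpow_nonneg hn.le _) (Real.rpow_nonneg hwo.le _),
          ← Real.rpow_mul hn.le, ← Real.rpow_mul hwo.le, ← Real.rpow_mul hD.le,
          Real.mul_rpow hwo.le (Real.rpow_nonneg hn.le _), ← Real.rpow_mul hn.le,
          show (2/p) * (p/2) = 1 by field_simp [hp0.ne'], show (2:ℝ) * (p/2) = p by ring,
          show (1/p) * p = 1 by field_simp [hp0.ne'], Real.rpow_one]
        rw [eq_div_iff (Real.rpow_pos_of_pos hD _).ne', mul_assoc, mul_assoc,
          ← Real.rpow_add hD, show (1 - 2/p) * (p/2) + (1 - p/2) = 0 by field_simp [hp0.ne']; try ring, Real.rpow_zero]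
        ring
      rw [E]
      exact hDQ
    -- aggregate
    have hsum1 : ∑ j, ∑ k, (X j k) ^ 2 ≤ n * Wo ^ (2:ℝ) := by
      calc ∑ j, ∑ k, (X j k) ^ 2 ≤ ∑ _j : Fin N, Wo ^ (2:ℝ) :=
            Finset.sum_le_sum fun j _ => step1 j
        _ = n * Wo ^ (2:ℝ) := by
            rw [Finset.sum_const, Finset.card_univ, Fintype.card_fin, nsmul_eq_mul]
    have hsum2 : n * (n ^ (2/p : ℝ) * wo ^ (2:ℝ) * D ^ (1 - 2/p)) ≤ ∑ i, ∑ k, (Y i k) ^ 2 := by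
      calc n * (n ^ (2/p : ℝ) * wo ^ (2:ℝ) * D ^ (1 - 2/p))
          = ∑ _i : Fin N, (n ^ (2/p : ℝ) * wo ^ (2:ℝ) * D ^ (1 - 2/p)) := by
            rw [Finset.sum_const, Finset.card_univ, Fintype.card_fin, nsmul_eq_mul]
        _ ≤ ∑ i, ∑ k, (Y i k) ^ 2 := Finset.sum_le_sum fun i _ => step2 i
    have hC : n ^ (2/p : ℝ) * wo ^ (2:ℝ) * D ^ (1 - 2/p) ≤ n * Wo ^ (2:ℝ) := by
      have h7 : n * (n ^ (2/p : ℝ) * wo ^ (2:ℝ) * D ^ (1 - 2/p)) ≤ n * (n * Wo ^ (2:ℝ)) := by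
        calc n * (n ^ (2/p : ℝ) * wo ^ (2:ℝ) * D ^ (1 - 2/p))
            ≤ ∑ i, ∑ k, (Y i k) ^ 2 := hsum2
          _ = n * ∑ j, ∑ k, (X j k) ^ 2 := hPar
          _ ≤ n * (n * Wo ^ (2:ℝ)) := mul_le_mul_of_nonneg_left hsum1 hn.le
      exact le_of_mul_le_mul_left h7 hn
    have key : n ^ t * wo ^ (2:ℝ) ≤ D ^ t * Wo ^ (2:ℝ) := by
      have E4 : n ^ (2/p : ℝ) * wo ^ (2:ℝ) * D ^ (1 - 2/p)
          = n * (n ^ t * wo ^ (2:ℝ) * (D ^ t)⁻¹) := by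
        have e1 : n ^ (2/p : ℝ) = n * n ^ t := by
          rw [show (2/p : ℝ) = 1 + t by rw [htdef]; ring, Real.rpow_add hn, Real.rpow_one]
        have e2 : D ^ (1 - 2/p : ℝ) = (D ^ t)⁻¹ := by
          rw [show (1 - 2/p : ℝ) = -t by rw [htdef]; ring, Real.rpow_neg hD.le]
        rw [e1, e2]
        ring
      rw [E4] at hC
      have h8 : n ^ t * wo ^ (2:ℝ) * (D ^ t)⁻¹ ≤ Wo ^ (2:ℝ) := le_of_mul_le_mul_left hC hn
      have h9 := mul_le_mul_of_nonneg_right h8 (Real.rpow_pos_of_pos hD t).le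
      calc n ^ t * wo ^ (2:ℝ) = n ^ t * wo ^ (2:ℝ) * (D ^ t)⁻¹ * D ^ t := by
            field_simp
        _ ≤ Wo ^ (2:ℝ) * D ^ t := h9
        _ = D ^ t * Wo ^ (2:ℝ) := by ring
    exact ending' hn hD hwo hWo ht rfl key
  · -- p > 2
    set t : ℝ := 1 - 2/p with htdef
    have h2plt : 2/p < 1 := (div_lt_one hp0).mpr hpgt
    have ht : 0 < t := by simp only [htdef]; linarith
    have hαeq : 2 * p / |p - 2| = 2 / t := by
      rw [abs_of_pos (by linarith : (0:ℝ) < p - 2), htdef]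
      field_simp
      try ring
    rw [hαeq]
    have step1 : ∀ j, wo ^ (2:ℝ) ≤ ∑ k, (X j k) ^ 2 := by
      intro j
      have hc1 : ∑ k, ((X j k) ^ 2 : ℝ) ^ (p/2 : ℝ) ≤ (∑ k, (X j k) ^ 2) ^ (p/2 : ℝ) :=
        sum_rpow_le_rpow_sum' _ _ (fun k _ => sq_nonneg _)
          ((le_div_iff₀ (by norm_num : (0:ℝ) < 2)).mpr (by linarith))
      rw [Finset.sum_congr rfl fun k _ => h_sqp (X j k)] at hc1
      have hAlb : wo ^ p ≤ ∑ k, |X j k| ^ p := by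
        have h6 := Real.rpow_le_rpow hwo.le (hXlb j) hp0.le
        rwa [← Real.rpow_mul (hA_nonneg j), one_div_mul_cancel hp0.ne',
          Real.rpow_one] at h6
      apply le_of_rpow_le_rpow (Real.rpow_nonneg hwo.le _) (hQX_nonneg j)
        (by positivity : (0:ℝ) < p/2)
      calc (wo ^ (2:ℝ)) ^ (p/2 : ℝ) = wo ^ p := by
            rw [← Real.rpow_mul hwo.le, show (2:ℝ) * (p/2) = p by ring]
        _ ≤ ∑ k, |X j k| ^ p := hAlb
        _ ≤ (∑ k, (X j k) ^ 2) ^ (p/2 : ℝ) := hc1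
    have step2 : ∀ i, ∑ k, (Y i k) ^ 2 ≤ D ^ t * (Wo ^ (2:ℝ) * n ^ (2/p : ℝ)) := by
      intro i
      have hcore := sum_rpow_le_card_rpow' Finset.univ (fun k => |Y i k| ^ p)
        (fun k _ => Real.rpow_nonneg (abs_nonneg _) p) (σ := 2/p) (by positivity) h2plt.le
      rw [Finset.card_univ, Fintype.card_fin] at hcore
      rw [Finset.sum_congr rfl fun k _ => h_p2 (Y i k)] at hcore
      -- hcore : ∑ Y^2 ≤ D^{1-2/p} * B^{2/p}
      have hBub : (∑ k, |Y i k| ^ p) ^ (2/p : ℝ) ≤ Wo ^ (2:ℝ) * n ^ (2/p : ℝ) := by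
        have h5 : (∑ k, |Y i k| ^ p) ^ ((1/p) * (2:ℝ)) = ((∑ k, |Y i k| ^ p) ^ (1/p)) ^ (2:ℝ) :=
          Real.rpow_mul (hB_nonneg i) _ _
        rw [show (2/p : ℝ) = (1/p) * 2 by ring, h5]
        calc ((∑ k, |Y i k| ^ p) ^ (1/p)) ^ (2:ℝ) ≤ (Wo * n ^ (1/p : ℝ)) ^ (2:ℝ) :=
              Real.rpow_le_rpow (Real.rpow_nonneg (hB_nonneg i) _) (hYub i) (by norm_num)
          _ = Wo ^ (2:ℝ) * n ^ ((1/p) * 2 : ℝ) := by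
              rw [Real.mul_rpow hWo.le (Real.rpow_nonneg hn.le _), ← Real.rpow_mul hn.le]
      calc ∑ k, (Y i k) ^ 2 ≤ D ^ (1 - 2/p) * (∑ k, |Y i k| ^ p) ^ (2/p : ℝ) := hcore
        _ ≤ D ^ (1 - 2/p) * (Wo ^ (2:ℝ) * n ^ (2/p : ℝ)) :=
            mul_le_mul_of_nonneg_left hBub (Real.rpow_pos_of_pos hD _).le
        _ = D ^ t * (Wo ^ (2:ℝ) * n ^ (2/p : ℝ)) := by rw [htdef]
    have hsum1 : n * wo ^ (2:ℝ) ≤ ∑ j, ∑ k, (X j k) ^ 2 := by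
      calc n * wo ^ (2:ℝ) = ∑ _j : Fin N, wo ^ (2:ℝ) := by
            rw [Finset.sum_const, Finset.card_univ, Fintype.card_fin, nsmul_eq_mul]
        _ ≤ ∑ j, ∑ k, (X j k) ^ 2 := Finset.sum_le_sum fun j _ => step1 j
    have hsum2 : ∑ i, ∑ k, (Y i k) ^ 2 ≤ n * (D ^ t * (Wo ^ (2:ℝ) * n ^ (2/p : ℝ))) := by
      calc ∑ i, ∑ k, (Y i k) ^ 2 ≤ ∑ _i : Fin N, (D ^ t * (Wo ^ (2:ℝ) * n ^ (2/p : ℝ))) :=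
            Finset.sum_le_sum fun i _ => step2 i
        _ = n * (D ^ t * (Wo ^ (2:ℝ) * n ^ (2/p : ℝ))) := by
            rw [Finset.sum_const, Finset.card_univ, Fintype.card_fin, nsmul_eq_mul]
    have hC : n * wo ^ (2:ℝ) ≤ D ^ t * (Wo ^ (2:ℝ) * n ^ (2/p : ℝ)) := by
      have h7 : n * (n * wo ^ (2:ℝ)) ≤ n * (D ^ t * (Wo ^ (2:ℝ) * n ^ (2/p : ℝ))) := by
        calc n * (n * wo ^ (2:ℝ)) ≤ n * ∑ j, ∑ k, (X j k) ^ 2 :=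
              mul_le_mul_of_nonneg_left hsum1 hn.le
          _ = ∑ i, ∑ k, (Y i k) ^ 2 := hPar.symm
          _ ≤ n * (D ^ t * (Wo ^ (2:ℝ) * n ^ (2/p : ℝ))) := hsum2
      exact le_of_mul_le_mul_left h7 hn
    have key : n ^ t * wo ^ (2:ℝ) ≤ D ^ t * Wo ^ (2:ℝ) := by
      have E4 : n ^ t * n ^ (2/p : ℝ) = n := by
        rw [← Real.rpow_add hn, show t + 2/p = 1 by rw [htdef]; ring, Real.rpow_one]
      have h8 : n ^ t * wo ^ (2:ℝ) * n ^ (2/p : ℝ) ≤ D ^ t * Wo ^ (2:ℝ) * n ^ (2/p : ℝ) := by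
        calc n ^ t * wo ^ (2:ℝ) * n ^ (2/p : ℝ)
            = (n ^ t * n ^ (2/p : ℝ)) * wo ^ (2:ℝ) := by ring
          _ = n * wo ^ (2:ℝ) := by rw [E4]
          _ ≤ D ^ t * (Wo ^ (2:ℝ) * n ^ (2/p : ℝ)) := hC
          _ = D ^ t * Wo ^ (2:ℝ) * n ^ (2/p : ℝ) := by ring
      exact le_of_mul_le_mul_right h8 (Real.rpow_pos_of_pos hn _)
    exact ending' hn hD hwo hWo ht rfl key

end Helpers

/-- **Theorem 1.7 (impossibility of linear dimension reduction in `B_{ℓ_p}`, `p ≠ 2`).**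
Fix `p ∈ [1,∞)` with `p ≠ 2` and two moduli `ω, Ω : [0,∞) → [0,∞)` with `ω(1) > 0`.
For every `m`, the `(2^{m+1}+1)`-point set `𝒮 = {0} ∪ {e_i} ∪ {2^{-m/p} w_i}` is contained
in the unit ball of `ℓ_p^{2^m}`, and any linear `T : ℝ^{2^m} → ℓ_p^d` satisfying
`ω(‖x-y‖_p) ≤ ‖Tx - Ty‖_p ≤ Ω(‖x-y‖_p)` on `𝒮` forces
`d ≥ (ω(1)/Ω(1))^{2p/|p-2|} (n-1)/2` where `n = 2^{m+1}+1`. -/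
theorem no_linear_dimension_reduction
    (p : ℝ) (hp : 1 ≤ p) (hp2 : p ≠ 2)
    (ω Ω : ℝ → ℝ) (hω1 : 0 < ω 1) (hωnn : ∀ t, 0 ≤ t → 0 ≤ ω t)
    (hΩnn : ∀ t, 0 ≤ t → 0 ≤ Ω t) (m : ℕ) :
    (∀ v ∈ walshSet p m, lpNorm p v ≤ 1) ∧
    ∀ (d : ℕ) (T : (Fin (2 ^ m) → ℝ) →ₗ[ℝ] (Fin d → ℝ)),
      (∀ x ∈ walshSet p m, ∀ y ∈ walshSet p m,
        ω (lpNorm p (x - y)) ≤ lpNorm p (T x - T y) ∧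
          lpNorm p (T x - T y) ≤ Ω (lpNorm p (x - y))) →
      (ω 1 / Ω 1) ^ (2 * p / |p - 2|) * ((((2 ^ (m + 1) + 1 : ℕ) : ℝ) - 1) / 2)
        ≤ (d : ℝ) := by
  have hp0 : 0 < p := lt_of_lt_of_le one_pos hp
  have hball : ∀ v ∈ walshSet p m, lpNorm p v ≤ 1 := by
    intro v hv
    rcases hv with (hv | ⟨i, rfl⟩)
    · rcases hv with (hv | ⟨j, rfl⟩)
      · rw [Set.mem_singleton_iff] at hv
        rw [hv, lpNorm_zero' hp0]
        norm_num
      · rw [lpNorm_single' hp0]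
    · rw [lpNorm_walshRow' hp0]
  refine ⟨hball, ?_⟩
  intro d T hT
  have mem0 : (0 : Fin (2 ^ m) → ℝ) ∈ walshSet p m := Or.inl (Or.inl rfl)
  have meme : ∀ j : Fin (2 ^ m), (Pi.single j 1 : Fin (2 ^ m) → ℝ) ∈ walshSet p m :=
    fun j => Or.inl (Or.inr ⟨j, rfl⟩)
  have memw : ∀ i : Fin (2 ^ m), ((2 : ℝ) ^ (-((m : ℝ) / p))) • walshRow m i ∈ walshSet p m :=
    fun i => Or.inr ⟨i, rfl⟩
  have hcpos : (0:ℝ) < (2 : ℝ) ^ (-((m : ℝ) / p)) := Real.rpow_pos_of_pos two_pos _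
  -- bounds at the basis vectors
  have hXb : ∀ j : Fin (2 ^ m), ω 1 ≤ lpNorm p (T (Pi.single j 1)) ∧
      lpNorm p (T (Pi.single j 1)) ≤ Ω 1 := by
    intro j
    have h := hT _ (meme j) _ mem0
    rwa [sub_zero, map_zero, sub_zero, lpNorm_single' hp0] at h
  -- bounds at the Walsh rows
  have hYb : ∀ i : Fin (2 ^ m), ω 1 ≤ ((2:ℝ) ^ (-((m : ℝ) / p))) * lpNorm p (T (walshRow m i)) ∧
      ((2:ℝ) ^ (-((m : ℝ) / p))) * lpNorm p (T (walshRow m i)) ≤ Ω 1 := by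
    intro i
    have h := hT _ (memw i) _ mem0
    rwa [sub_zero, map_zero, sub_zero, lpNorm_walshRow' hp0, _root_.map_smul,
      lpNorm_smul' hp0 _ hcpos.le] at h
  have hΩpos : 0 < Ω 1 := by
    have j0 : Fin (2 ^ m) := ⟨0, Nat.two_pow_pos m⟩
    exact lt_of_lt_of_le hω1 ((hXb j0).1.trans ((hXb j0).2))
  -- simplify the right-hand side constant
  have hconst : ((((2 ^ (m + 1) + 1 : ℕ) : ℝ) - 1) / 2) = ((2 ^ m : ℕ) : ℝ) := by
    push_cast
    ring
  rw [hconst]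
  -- degenerate case d = 0
  rcases Nat.eq_zero_or_pos d with rfl | hdpos
  · exfalso
    have j0 : Fin (2 ^ m) := ⟨0, Nat.two_pow_pos m⟩
    have h := (hXb j0).1
    have hz : lpNorm p (T (Pi.single j0 1)) = 0 := by
      unfold _root_.lpNorm
      rw [Finset.univ_eq_empty, Finset.sum_empty, Real.zero_rpow (one_div_ne_zero hp0.ne')]
    rw [hz] at h
    linarith
  -- main case
  have hNpos : 0 < 2 ^ m := Nat.two_pow_pos m
  set X : Fin (2 ^ m) → Fin d → ℝ := fun j => T (Pi.single j 1) with hXdef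
  set Y : Fin (2 ^ m) → Fin d → ℝ := fun i => T (walshRow m i) with hYdef
  have hYcoord : ∀ i k, Y i k = ∑ j, walshRow m i j * X j k := by
    intro i k
    have hw : walshRow m i = ∑ j, walshRow m i j • (Pi.single j 1 : Fin (2 ^ m) → ℝ) := by
      funext l
      rw [Finset.sum_apply]
      simp only [Pi.smul_apply, smul_eq_mul]
      rw [Finset.sum_congr rfl fun j (_ : j ∈ Finset.univ) => by
        rw [Pi.single_apply j (1:ℝ) l, mul_ite, mul_one, mul_zero]]
      rw [Finset.sum_ite_eq Finset.univ l (fun j => walshRow m i j)]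
      simp
    have : Y i = ∑ j, walshRow m i j • X j := by
      rw [hYdef]
      simp only
      conv_lhs => rw [hw]
      rw [map_sum]
      exact Finset.sum_congr rfl fun j _ => by rw [_root_.map_smul]
    rw [this, Finset.sum_apply]
    exact Finset.sum_congr rfl fun j _ => by rw [Pi.smul_apply, smul_eq_mul]
  have hPar : ∑ i, ∑ k, (Y i k) ^ 2 = (((2 ^ m : ℕ)):ℝ) * ∑ j, ∑ k, (X j k) ^ 2 := by
    have hcast : ((2 ^ m : ℕ) : ℝ) = (2:ℝ) ^ m := by push_cast; ring
    rw [Finset.sum_comm, hcast]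
    have hk : ∀ k, ∑ i, (Y i k) ^ 2 = (2:ℝ) ^ m * ∑ j, (X j k) ^ 2 := by
      intro k
      rw [Finset.sum_congr rfl fun i (_ : i ∈ Finset.univ) => by rw [hYcoord i k]]
      exact walsh_parseval m (fun j => X j k)
    rw [Finset.sum_congr rfl fun k _ => hk k, ← Finset.mul_sum, Finset.sum_comm]
  have hNcast : (0:ℝ) < (((2 ^ m : ℕ)):ℝ) ^ (1/p : ℝ) := Real.rpow_pos_of_pos (by positivity) _
  have hcN : ((2:ℝ) ^ (-((m : ℝ) / p))) * (((2 ^ m : ℕ)):ℝ) ^ (1/p : ℝ) = 1 := c_mul_pow hp0 m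
  have hXub : ∀ j, (∑ k, |X j k| ^ p) ^ (1/p) ≤ Ω 1 := fun j => (hXb j).2
  have hXlb : ∀ j, ω 1 ≤ (∑ k, |X j k| ^ p) ^ (1/p) := fun j => (hXb j).1
  have hLid : ∀ i, (((2:ℝ) ^ (-((m : ℝ) / p))) * lpNorm p (Y i)) * (((2 ^ m : ℕ)):ℝ) ^ (1/p : ℝ)
      = lpNorm p (Y i) := by
    intro i
    rw [mul_comm ((2:ℝ) ^ (-((m : ℝ) / p))) _, mul_assoc, hcN, mul_one]
  have hYub : ∀ i, (∑ k, |Y i k| ^ p) ^ (1/p) ≤ Ω 1 * (((2 ^ m : ℕ)):ℝ) ^ (1/p : ℝ) := by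
    intro i
    show lpNorm p (Y i) ≤ Ω 1 * (((2 ^ m : ℕ)):ℝ) ^ (1/p : ℝ)
    rw [← hLid i]
    exact mul_le_mul_of_nonneg_right (hYb i).2 hNcast.le
  have hYlb : ∀ i, ω 1 * (((2 ^ m : ℕ)):ℝ) ^ (1/p : ℝ) ≤ (∑ k, |Y i k| ^ p) ^ (1/p) := by
    intro i
    show ω 1 * (((2 ^ m : ℕ)):ℝ) ^ (1/p : ℝ) ≤ lpNorm p (Y i)
    rw [← hLid i]
    exact mul_le_mul_of_nonneg_right (hYb i).1 hNcast.le
  exact main_bound hp hp2 hdpos hNpos X Y hPar hω1 hΩpos hXub hXlb hYub hYlb
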